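/- arXiv:2112.15262 — 6 statements merged into one kernel-verified Lean document; each statement's English description precedes it below -/
import Mathlib

section
/- Let r ≥ 3, α₁, α₂ ∈ ℂ, and θ ∈ ℝ. Put K̃ = (1/√2)[[I, I], [I, -I]] with I = I_{2^{r-2}}, and set D₁₁ = D_1^(r-1)(α₁+α₂+θ), D₁₂ = D_1^(r-1)(-(α₁-α₂-θ)), D₂₁ = D_1^(r-1)(-(α₁-α₂+θ)), D₂₂ = D_1^(r-1)(α₁+α₂-θ). Then K̃ · [[D₁₁, D₁₂], [D₂₁, D₂₂]] · K̃ = 2 · D_2^(r)(α₂) · P_{21}^(r)(θ) · D_1^(r)(α₁). -/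
/-!
Common definitions for zeta functions associated with homogeneous cones
(following Nakashima, "Functional equations of zeta functions associated
with homogeneous cones"): the functions `c(z) = cos (π z / 2)`,
`s(z) = sin (π z / 2)`, the recursive ordering of the sign set
`I_r = {1,-1}^r`, the Hadamard matrices `J^(r)`, the gamma-matrix
`A_r(α; Θ)`, the matrices `C_r`, `S_r`, the diagonal matrices `D_j^(r)(α)`,
and the rotation matrices `P_{kj}^(r)(θ) = c(θ)·I + s(θ)·X_{kj}^(r)`.
Matrices indexed by `I_s` are identified with `2^s × 2^s` matrices via the
recursive ordering, which is encoded by `ord s : Fin (2^s) → (Fin s → ℤ)`,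
sending a position to the corresponding sign vector.
-/

noncomputable section
open Matrix Complex

namespace HomCone

/-- `c(z) = cos (π z / 2)`. -/
def cc (z : ℂ) : ℂ := Complex.cos (Real.pi * z / 2)

/-- `s(z) = sin (π z / 2)`. -/
def ss (z : ℂ) : ℂ := Complex.sin (Real.pi * z / 2)

/-- The recursive ordering of `I_r = {1,-1}^r`: `ord r i` is the `i`-th sign
vector of `I_r` (positions starting from `0`).  For `r+1`: the `i`-th element
of `I_{r+1}` is `(1, ε_i)` for `i < 2^r` and `(-1, -ε_{i-2^r})` otherwise,
where `ε_i` is the `i`-th element of `I_r`. -/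
def ord : (r : ℕ) → Fin (2 ^ r) → Fin r → ℤ
  | 0, _, j => j.elim0
  | r + 1, i, j =>
    if h : (i : ℕ) < 2 ^ r then
      (if _ : (j : ℕ) = 0 then 1
       else ord r ⟨(i : ℕ), h⟩ ⟨(j : ℕ) - 1, by have := j.isLt; omega⟩)
    else
      (if _ : (j : ℕ) = 0 then -1
       else - ord r ⟨(i : ℕ) - 2 ^ r, by
              have h1 := i.isLt
              have h2 : 2 ^ (r + 1) = 2 ^ r * 2 := pow_succ 2 r
              omega⟩ ⟨(j : ℕ) - 1, by have := j.isLt; omega⟩)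

/-- The `l`-th binary digit (`l = 1, …, m`, with `l = 1` the most significant)
of a position `i ∈ Fin (2^m)`; by convention `0` for `l` outside `1, …, m`. -/
def bitv (m : ℕ) (i : Fin (2 ^ m)) (l : ℕ) : ℕ :=
  if 1 ≤ l ∧ l ≤ m ∧ (i : ℕ).testBit (m - l) then 1 else 0

/-- The Hadamard matrix `J^(r)`, defined recursively by
`J^(0) = (1)` and `J^(r+1) = J^(1) ⊗ J^(r)`, i.e. `J^(r+1)` is the `2 × 2`
block matrix `(1/√2) [[J^(r), J^(r)], [J^(r), -J^(r)]]`. -/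
def Jmat : (r : ℕ) → Matrix (Fin (2 ^ r)) (Fin (2 ^ r)) ℂ
  | 0 => 1
  | r + 1 => fun i i' =>
    ((Real.sqrt 2 : ℂ))⁻¹ *
      (if 2 ^ r ≤ (i : ℕ) ∧ 2 ^ r ≤ (i' : ℕ) then -1 else 1) *
      Jmat r ⟨(i : ℕ) % 2 ^ r, Nat.mod_lt _ (Nat.two_pow_pos r)⟩
             ⟨(i' : ℕ) % 2 ^ r, Nat.mod_lt _ (Nat.two_pow_pos r)⟩

/-- The matrix `A_r(α; Θ)` of size `2^r`, with `(ε, δ)` entry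
`exp((π√-1/2)(Σ_i ε_i δ_i α_i + Σ_{j<k} ε_j δ_k θ_{kj}))`, rows and columns
being indexed by `I_r` via the recursive ordering; here `θ_{kj} = Θ k j`. -/
def Amat (r : ℕ) (α : Fin r → ℂ) (Θ : Fin r → Fin r → ℝ) :
    Matrix (Fin (2 ^ r)) (Fin (2 ^ r)) ℂ := fun i i' =>
  Complex.exp (Real.pi * Complex.I / 2 *
    ((∑ a : Fin r, (ord r i a : ℂ) * (ord r i' a : ℂ) * α a) +
     ∑ a : Fin r, ∑ b : Fin r,
       if a < b then (ord r i a : ℂ) * (ord r i' b : ℂ) * (Θ b a : ℂ) else 0))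

/-- The element of `I_r^0 = {ε ∈ {1,-1}^r : ε_1 = 1}` at position
`i ∈ Fin (2^(r-1))`, via the identification of `I_r^0` with `I_{r-1}`
dropping the first coordinate (with the induced ordering). -/
def sgn0 (r : ℕ) (i : Fin (2 ^ (r - 1))) (a : Fin r) : ℤ :=
  if _ : (a : ℕ) = 0 then 1
  else ord (r - 1) i ⟨(a : ℕ) - 1, by have := a.isLt; omega⟩

/-- The matrix `C_r(α; Θ)` of size `2^(r-1)`, with `(ε, δ)` entry
`c(Σ_i ε_i δ_i α_i + Σ_{j<k} ε_j δ_k θ_{kj})` for `ε, δ ∈ I_r^0`. -/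
def Cmat (r : ℕ) (α : Fin r → ℂ) (Θ : Fin r → Fin r → ℝ) :
    Matrix (Fin (2 ^ (r - 1))) (Fin (2 ^ (r - 1))) ℂ := fun i i' =>
  cc ((∑ a : Fin r, (sgn0 r i a : ℂ) * (sgn0 r i' a : ℂ) * α a) +
     ∑ a : Fin r, ∑ b : Fin r,
       if a < b then (sgn0 r i a : ℂ) * (sgn0 r i' b : ℂ) * (Θ b a : ℂ) else 0)

/-- The matrix `S_r(α; Θ)` of size `2^(r-1)`, with `(ε, δ)` entry
`s(Σ_i ε_i δ_i α_i + Σ_{j<k} ε_j δ_k θ_{kj})` for `ε, δ ∈ I_r^0`. -/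
def Smat (r : ℕ) (α : Fin r → ℂ) (Θ : Fin r → Fin r → ℝ) :
    Matrix (Fin (2 ^ (r - 1))) (Fin (2 ^ (r - 1))) ℂ := fun i i' =>
  ss ((∑ a : Fin r, (sgn0 r i a : ℂ) * (sgn0 r i' a : ℂ) * α a) +
     ∑ a : Fin r, ∑ b : Fin r,
       if a < b then (sgn0 r i a : ℂ) * (sgn0 r i' b : ℂ) * (Θ b a : ℂ) else 0)

/-- The `i`-th diagonal entry of the diagonal matrix `D_j^(r)(α)` of size
`2^(r-1)`, defined recursively:
`D_1^(r)(α) = diag(c(α)·I_{2^(r-2)}, s(α)·I_{2^(r-2)})` (for `r = 2` this is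
`diag(c(α), s(α))`), `D_2^(r)(α) = diag(D_1^(r-1)(α), D_1^(r-1)(α+1))`
(for `r = 2` this gives `D_2^(2)(α) = diag(c(α), -s(α))`), and
`D_k^(r)(α) = diag(D_{k-1}^(r-1)(α), D_{k-1}^(r-1)(α))` for `3 ≤ k ≤ r`. -/
def dEnt : (r : ℕ) → (j : ℕ) → ℂ → Fin (2 ^ (r - 1)) → ℂ
  | r, 0, _, _ => 0
  | r, 1, α, i => if (i : ℕ) < 2 ^ (r - 2) then cc α else ss α
  | r, 2, α, i =>
    if h : (i : ℕ) < 2 ^ (r - 2) then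
      dEnt (r - 1) 1 α ⟨(i : ℕ), by
        have h3 : r - 1 - 1 = r - 2 := by omega
        rw [h3]; exact h⟩
    else
      dEnt (r - 1) 1 (α + 1) ⟨(i : ℕ) - 2 ^ (r - 2), by
        have h1 := i.isLt
        have h2 : 2 ^ (r - 1) ≤ 2 * 2 ^ (r - 2) := by
          calc 2 ^ (r - 1) ≤ 2 ^ (r - 2 + 1) :=
                Nat.pow_le_pow_right (by norm_num) (by omega)
            _ = 2 * 2 ^ (r - 2) := by rw [pow_succ]; exact Nat.mul_comm _ _
        have h3 : r - 1 - 1 = r - 2 := by omega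
        rw [h3]; omega⟩
  | r, j + 3, α, i =>
    if h : (i : ℕ) < 2 ^ (r - 2) then
      dEnt (r - 1) (j + 2) α ⟨(i : ℕ), by
        have h3 : r - 1 - 1 = r - 2 := by omega
        rw [h3]; exact h⟩
    else
      dEnt (r - 1) (j + 2) α ⟨(i : ℕ) - 2 ^ (r - 2), by
        have h1 := i.isLt
        have h2 : 2 ^ (r - 1) ≤ 2 * 2 ^ (r - 2) := by
          calc 2 ^ (r - 1) ≤ 2 ^ (r - 2 + 1) :=
                Nat.pow_le_pow_right (by norm_num) (by omega)
            _ = 2 * 2 ^ (r - 2) := by rw [pow_succ]; exact Nat.mul_comm _ _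
        have h3 : r - 1 - 1 = r - 2 := by omega
        rw [h3]; omega⟩

/-- The diagonal matrix `D_j^(r)(α)` of size `2^(r-1)` (`j = 1, …, r`). -/
def Dmat (r j : ℕ) (α : ℂ) : Matrix (Fin (2 ^ (r - 1))) (Fin (2 ^ (r - 1))) ℂ :=
  Matrix.diagonal (dEnt r j α)

/-- The matrix `X_{kj}^(r) = I_{2^(j-1)} ⊗ R₂ ⊗ A₂^{⊗(k-j-1)} ⊗ I_{2^(r-k)}`
of size `2^(r-1)` (`1 ≤ j < k ≤ r`), where `R₂ = [[0,-1],[1,0]]` and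
`A₂ = [[0,1],[1,0]]`, written out entrywise via binary digits (the factors of
the Kronecker product act on the binary digits, the first factor acting on
the most significant digits): the `(i, i')` entry is nonzero iff the digits
of `i` and `i'` agree at the positions `l < j` and `l ≥ k` (the identity
factors) and disagree at the positions `j ≤ l ≤ k-1` (the factors `R₂` and
`A₂`), and the nonzero value is `-1` when the `j`-th digit of `i` is `0`,
and `1` when it is `1` (the factor `R₂`). -/
def Xmat (r j k : ℕ) : Matrix (Fin (2 ^ (r - 1))) (Fin (2 ^ (r - 1))) ℂ :=
  fun i i' =>
    if (∀ l ∈ Finset.range r, (l < j ∨ k ≤ l) → bitv (r - 1) i l = bitv (r - 1) i' l)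
        ∧ (∀ l ∈ Finset.range r, j ≤ l → l < k → bitv (r - 1) i l ≠ bitv (r - 1) i' l)
    then (if bitv (r - 1) i j = 0 then -1 else 1) else 0

/-- The orthogonal matrix `P_{kj}^(r)(θ) = c(θ)·I_{2^(r-1)} + s(θ)·X_{kj}^(r)`. -/
def Pmat (r j k : ℕ) (θ : ℝ) : Matrix (Fin (2 ^ (r - 1))) (Fin (2 ^ (r - 1))) ℂ :=
  cc θ • (1 : Matrix (Fin (2 ^ (r - 1))) (Fin (2 ^ (r - 1))) ℂ) + ss θ • Xmat r j k

lemma two_pow_pred (m : ℕ) (h : 1 ≤ m) : 2 ^ (m - 1) + 2 ^ (m - 1) = 2 ^ m := by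
  have h1 : m - 1 + 1 = m := by omega
  have h2 : 2 ^ (m - 1 + 1) = 2 ^ (m - 1) * 2 := pow_succ 2 (m - 1)
  rw [h1] at h2
  omega

/-- The identification `Fin (2^(m-1)) ⊕ Fin (2^(m-1)) ≃ Fin (2^m)` used to
regard a `2 × 2` block matrix with blocks of size `2^(m-1)` as a matrix of
size `2^m`. -/
def sumEquiv (m : ℕ) (h : 1 ≤ m) : Fin (2 ^ (m - 1)) ⊕ Fin (2 ^ (m - 1)) ≃ Fin (2 ^ m) :=
  finSumFinEquiv.trans (finCongr (two_pow_pred m h))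

/-- The matrix `K̃ = (1/√2) [[I, I], [I, -I]]` of size `2^m`, with
`I = I_{2^(m-1)}`. -/
def Ktilde (m : ℕ) (h : 1 ≤ m) : Matrix (Fin (2 ^ m)) (Fin (2 ^ m)) ℂ :=
  Matrix.reindex (sumEquiv m h) (sumEquiv m h)
    (((Real.sqrt 2 : ℂ))⁻¹ • Matrix.fromBlocks 1 1 1 (-1))

end HomCone

/-!
Split `Fin (2^(r-1))` as `Fin (2^(r-2)) ⊕ Fin (2^(r-2))` along the leading binary digit.
In this splitting `D_1^(r)(α₁)`, `D_2^(r)(α₂)` and `P_{21}^(r)(θ)` are `2 × 2` block matrices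
whose blocks are scalar multiples of the identity or the diagonal matrices `D_1^(r-1)(β)`, and
`X_{21}^(r)` is `R₂ ⊗ I`. Both sides of the identity then become `2 × 2` block matrices of
diagonal matrices. Every diagonal entry of `D_1^(r-1)(β)` is `c(β)` or `s(β)`, so the identity
comes down to the addition formulas, e.g. `c(x + θ) + c(x - θ) = 2 c(x) c(θ)`, together with
`c(β + 1) = -s(β)` and `s(β + 1) = c(β)`.
-/

namespace HomCone

lemma cc_add (a b : ℂ) : cc (a + b) = cc a * cc b - ss a * ss b := by
  simp only [cc, ss, mul_add, add_div, Complex.cos_add]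

lemma ss_add (a b : ℂ) : ss (a + b) = ss a * cc b + cc a * ss b := by
  simp only [cc, ss, mul_add, add_div, Complex.sin_add]

lemma cc_neg (a : ℂ) : cc (-a) = cc a := by
  simp only [cc, mul_neg, neg_div, Complex.cos_neg]

lemma ss_neg (a : ℂ) : ss (-a) = -ss a := by
  simp only [ss, mul_neg, neg_div, Complex.sin_neg]

lemma cc_one : cc 1 = 0 := by
  simp [cc]

lemma ss_one : ss 1 = 1 := by
  simp [ss]

lemma inv_sqrt_two_mul_self : (Real.sqrt 2 : ℂ)⁻¹ * (Real.sqrt 2 : ℂ)⁻¹ = 2⁻¹ := by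
  rw [← mul_inv, ← Complex.ofReal_mul, Real.mul_self_sqrt zero_le_two]
  norm_num

section SumEquiv

variable {m : ℕ} (h : 1 ≤ m)

lemma sumEquiv_inl_val (a : Fin (2 ^ (m - 1))) : (sumEquiv m h (Sum.inl a) : ℕ) = a := rfl

lemma sumEquiv_inr_val (a : Fin (2 ^ (m - 1))) :
    (sumEquiv m h (Sum.inr a) : ℕ) = 2 ^ (m - 1) + a := rfl

lemma submatrix_sumEquiv_injective :
    Function.Injective fun M : Matrix (Fin (2 ^ m)) (Fin (2 ^ m)) ℂ =>
      M.submatrix (sumEquiv m h) (sumEquiv m h) :=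
  (reindex (sumEquiv m h).symm (sumEquiv m h).symm).injective

lemma Ktilde_submatrix_sumEquiv :
    (Ktilde m h).submatrix (sumEquiv m h) (sumEquiv m h) =
      (Real.sqrt 2 : ℂ)⁻¹ • fromBlocks 1 1 1 (-1) := by
  simp [Ktilde, reindex_apply, submatrix_submatrix]

end SumEquiv

section Blocks

variable {r : ℕ} (h : 1 ≤ r - 1)

lemma two_pow_sub_two : (2 : ℕ) ^ (r - 2) = 2 ^ (r - 1 - 1) := by
  rw [Nat.sub_sub]

lemma dEnt_one_comp_sumEquiv (α : ℂ) :
    dEnt r 1 α ∘ sumEquiv (r - 1) h = Sum.elim (fun _ => cc α) (fun _ => ss α) := by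
  funext x
  rcases x with a | a <;>
    simp [dEnt, sumEquiv_inl_val, sumEquiv_inr_val, two_pow_sub_two, a.isLt]

lemma dEnt_two_comp_sumEquiv (α : ℂ) :
    dEnt r 2 α ∘ sumEquiv (r - 1) h = Sum.elim (dEnt (r - 1) 1 α) (dEnt (r - 1) 1 (α + 1)) := by
  funext x
  rcases x with a | a
  · have ha : (a : ℕ) < 2 ^ (r - 2) := by rw [two_pow_sub_two]; exact a.isLt
    rw [Function.comp_apply, dEnt.eq_3, dif_pos (by exact ha)]
    rfl
  · have ha : ¬ (2 ^ (r - 1 - 1) + (a : ℕ)) < 2 ^ (r - 2) := by rw [two_pow_sub_two]; omega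
    rw [Function.comp_apply, dEnt.eq_3, dif_neg (by exact ha)]
    congr
    simp [sumEquiv_inr_val, two_pow_sub_two]

lemma Dmat_one_submatrix_sumEquiv (α : ℂ) :
    (Dmat r 1 α).submatrix (sumEquiv (r - 1) h) (sumEquiv (r - 1) h) =
      fromBlocks (cc α • 1) 0 0 (ss α • 1) := by
  rw [Dmat, submatrix_diagonal_equiv, dEnt_one_comp_sumEquiv, smul_one_eq_diagonal,
    smul_one_eq_diagonal, fromBlocks_diagonal]

lemma Dmat_two_submatrix_sumEquiv (α : ℂ) :
    (Dmat r 2 α).submatrix (sumEquiv (r - 1) h) (sumEquiv (r - 1) h) =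
      fromBlocks (Dmat (r - 1) 1 α) 0 0 (Dmat (r - 1) 1 (α + 1)) := by
  rw [Dmat, submatrix_diagonal_equiv, dEnt_two_comp_sumEquiv, Dmat, Dmat, fromBlocks_diagonal]

lemma bitv_zero (m : ℕ) (i : Fin (2 ^ m)) : bitv m i 0 = 0 := by
  simp [bitv]

lemma bitv_of_lt (m : ℕ) (i : Fin (2 ^ m)) {l : ℕ} (hl : m < l) : bitv m i l = 0 := by
  simp [bitv, hl.not_ge]

lemma bitv_sumEquiv_inl_one (a : Fin (2 ^ (r - 1 - 1))) :
    bitv (r - 1) (sumEquiv (r - 1) h (Sum.inl a)) 1 = 0 := by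
  simp [bitv, sumEquiv_inl_val, Nat.testBit_lt_two_pow a.isLt]

lemma bitv_sumEquiv_inr_one (a : Fin (2 ^ (r - 1 - 1))) :
    bitv (r - 1) (sumEquiv (r - 1) h (Sum.inr a)) 1 = 1 := by
  simp [bitv, sumEquiv_inr_val, h, Nat.testBit_two_pow_add_eq, Nat.testBit_lt_two_pow a.isLt]

lemma bitv_sumEquiv_inr_of_two_le (a : Fin (2 ^ (r - 1 - 1))) {l : ℕ} (hl : 2 ≤ l) :
    bitv (r - 1) (sumEquiv (r - 1) h (Sum.inr a)) l =
      bitv (r - 1) (sumEquiv (r - 1) h (Sum.inl a)) l := by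
  by_cases hlr : l ≤ r - 1
  · simp only [bitv, sumEquiv_inr_val, sumEquiv_inl_val,
      Nat.testBit_two_pow_add_gt (show r - 1 - l < r - 1 - 1 by omega)]
    rfl
  · simp [bitv, hlr]

lemma bitv_sumEquiv_inl_eq_iff (a b : Fin (2 ^ (r - 1 - 1))) :
    (∀ l, 2 ≤ l → bitv (r - 1) (sumEquiv (r - 1) h (Sum.inl a)) l =
      bitv (r - 1) (sumEquiv (r - 1) h (Sum.inl b)) l) ↔ a = b := by
  refine ⟨fun hab => Fin.ext (Nat.eq_of_testBit_eq fun j => ?_), by rintro rfl _ _; rfl⟩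
  by_cases hj : j < r - 1 - 1
  · have := hab (r - 1 - j) (by omega)
    simp only [bitv, sumEquiv_inl_val, show r - 1 - (r - 1 - j) = j by omega] at this
    grind
  · have hpow : 2 ^ (r - 1 - 1) ≤ 2 ^ j := Nat.pow_le_pow_right two_pos (by omega)
    rw [Nat.testBit_lt_two_pow (a.isLt.trans_le hpow),
      Nat.testBit_lt_two_pow (b.isLt.trans_le hpow)]

lemma forall_bitv_eq_outside_one_iff (i j : Fin (2 ^ (r - 1))) :
    (∀ l ∈ Finset.range r, (l < 1 ∨ 2 ≤ l) → bitv (r - 1) i l = bitv (r - 1) j l) ↔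
      ∀ l, 2 ≤ l → bitv (r - 1) i l = bitv (r - 1) j l := by
  refine ⟨fun hij l hl => ?_, fun hij l _ hl => ?_⟩
  · by_cases hlr : l < r
    · exact hij l (Finset.mem_range.2 hlr) (Or.inr hl)
    · rw [bitv_of_lt _ _ (by omega), bitv_of_lt _ _ (by omega)]
  · rcases hl with hl | hl
    · rw [Nat.lt_one_iff.1 hl, bitv_zero, bitv_zero]
    · exact hij l hl

lemma forall_bitv_ne_one_iff (h : 1 ≤ r - 1) (i j : Fin (2 ^ (r - 1))) :
    (∀ l ∈ Finset.range r, 1 ≤ l → l < 2 → bitv (r - 1) i l ≠ bitv (r - 1) j l) ↔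
      bitv (r - 1) i 1 ≠ bitv (r - 1) j 1 := by
  refine ⟨fun hij => hij 1 (Finset.mem_range.2 (by omega)) le_rfl one_lt_two,
    fun hij l _ h1 h2 => ?_⟩
  rwa [show l = 1 by omega]

lemma Xmat_one_two_submatrix_sumEquiv :
    (Xmat r 1 2).submatrix (sumEquiv (r - 1) h) (sumEquiv (r - 1) h) =
      fromBlocks 0 (-1) 1 0 := by
  ext x y
  rcases x with a | a <;> rcases y with b | b <;>
    simp +contextual only [submatrix_apply, Xmat, forall_bitv_eq_outside_one_iff,
      forall_bitv_ne_one_iff h, bitv_sumEquiv_inl_one, bitv_sumEquiv_inr_one,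
      bitv_sumEquiv_inr_of_two_le, bitv_sumEquiv_inl_eq_iff]
  all_goals simp [one_apply, neg_ite]

lemma Pmat_one_two_submatrix_sumEquiv (θ : ℝ) :
    (Pmat r 1 2 θ).submatrix (sumEquiv (r - 1) h) (sumEquiv (r - 1) h) =
      fromBlocks (cc θ • 1) (-ss θ • 1) (ss θ • 1) (cc θ • 1) := by
  simp only [Pmat, submatrix_add, submatrix_smul, Pi.add_apply, Pi.smul_apply,
    submatrix_one_equiv, Xmat_one_two_submatrix_sumEquiv, ← fromBlocks_one, fromBlocks_smul,
    fromBlocks_add]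
  simp

end Blocks

lemma hadamard_conj_fromBlocks_Dmat_one (r : ℕ) (a b : ℂ) (t : ℝ) :
    ((Real.sqrt 2 : ℂ)⁻¹ • fromBlocks 1 1 1 (-1)) *
        fromBlocks (Dmat r 1 (a + b + t)) (Dmat r 1 (-(a - b - t)))
          (Dmat r 1 (-(a - b + t))) (Dmat r 1 (a + b - t)) *
        ((Real.sqrt 2 : ℂ)⁻¹ • fromBlocks 1 1 1 (-1)) =
      (2 : ℂ) • (fromBlocks (Dmat r 1 b) 0 0 (Dmat r 1 (b + 1)) *
        fromBlocks (cc t • 1) (-ss t • 1) (ss t • 1) (cc t • 1) *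
          fromBlocks (cc a • 1) 0 0 (ss a • 1)) := by
  simp only [Matrix.smul_mul, Matrix.mul_smul, smul_smul, inv_sqrt_two_mul_self]
  simp only [fromBlocks_multiply, mul_one, one_mul, mul_zero, zero_mul, add_zero, zero_add,
    Matrix.mul_neg, Matrix.neg_mul, fromBlocks_smul, fromBlocks_inj]
  refine ⟨?_, ?_, ?_, ?_⟩ <;> ext i j <;> rcases eq_or_ne i j with rfl | hij <;>
    simp [Dmat, *]
  all_goals
    simp only [dEnt]
    split_ifs <;> simp only [cc_add, ss_add, cc_neg, ss_neg, cc_one, ss_one, sub_eq_add_neg] <;>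
      ring

/-- for `r ≥ 3`,
`K̃ · [[D₁₁, D₁₂], [D₂₁, D₂₂]] · K̃ = 2 · D_2^(r)(α₂) · P_{21}^(r)(θ) · D_1^(r)(α₁)`
with the blocks `D₁₁ = D_1^(r-1)(α₁+α₂+θ)`, `D₁₂ = D_1^(r-1)(-(α₁-α₂-θ))`,
`D₂₁ = D_1^(r-1)(-(α₁-α₂+θ))`, `D₂₂ = D_1^(r-1)(α₁+α₂-θ)`. -/
theorem statement5 (r : ℕ) (hr : 3 ≤ r) (α₁ α₂ : ℂ) (θ : ℝ) :
    Ktilde (r - 1) (by omega) *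
        (Matrix.reindex (sumEquiv (r - 1) (by omega)) (sumEquiv (r - 1) (by omega))
          (Matrix.fromBlocks
            (Dmat (r - 1) 1 (α₁ + α₂ + θ)) (Dmat (r - 1) 1 (-(α₁ - α₂ - θ)))
            (Dmat (r - 1) 1 (-(α₁ - α₂ + θ))) (Dmat (r - 1) 1 (α₁ + α₂ - θ)))) *
        Ktilde (r - 1) (by omega) =
      (2 : ℂ) • (Dmat r 2 α₂ * Pmat r 1 2 θ * Dmat r 1 α₁) := by
  have h : 1 ≤ r - 1 := by omega
  apply submatrix_sumEquiv_injective h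
  simp only [← submatrix_mul_equiv _ _ _ (sumEquiv (r - 1) h), submatrix_smul, Pi.smul_apply,
    Ktilde_submatrix_sumEquiv, Dmat_two_submatrix_sumEquiv, Pmat_one_two_submatrix_sumEquiv,
    Dmat_one_submatrix_sumEquiv, reindex_apply, submatrix_submatrix, Equiv.symm_comp_self,
    submatrix_id_id]
  exact hadamard_conj_fromBlocks_Dmat_one (r - 1) α₁ α₂ θ

end HomCone
end
end

section
/- Let r ≥ 2, α ∈ ℂ^r, and Θ = (θ_{kj})_{1≤j<k≤r} be real numbers. Then det A_r(α;Θ) = Π_{j=1}^r (2 sin πα_j)^{2^{r-1}}; in particular, the determinant does not depend on Θ. Consequently, writing Γ(α) = Γ(α₁)⋯Γ(α_r) and |α| = α₁+⋯+α_r, the matrix Ã_r(α;Θ) := (Γ(α)/(2π)^{|α|}) · A_r(α;Θ) satisfies det Ã_r(α;Θ) = (Γ(α)/(2π)^{|α|})^{2^r} · (Π_{j=1}^r 2 sin πα_j)^{2^{r-1}}. -/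
/-!
Common definitions for zeta functions associated with homogeneous cones
(following Nakashima, "Functional equations of zeta functions associated
with homogeneous cones"): the functions `c(z) = cos (π z / 2)`,
`s(z) = sin (π z / 2)`, the recursive ordering of the sign set
`I_r = {1,-1}^r`, the Hadamard matrices `J^(r)`, the gamma-matrix
`A_r(α; Θ)`, the matrices `C_r`, `S_r`, the diagonal matrices `D_j^(r)(α)`,
and the rotation matrices `P_{kj}^(r)(θ) = c(θ)·I + s(θ)·X_{kj}^(r)`.
Matrices indexed by `I_s` are identified with `2^s × 2^s` matrices via the
recursive ordering, which is encoded by `ord s : Fin (2^s) → (Fin s → ℤ)`,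
sending a position to the corresponding sign vector.
-/

noncomputable section
open Matrix Complex

/-!
Write `ε = (ε₁, ε')`, `δ = (δ₁, δ')`. In the recursive ordering the two halves of `I_{s+1}` are
`ε₁ = 1` and `ε₁ = -1`, and `A_{s+1}` becomes `[[z B, w B P], [w B P, z B]]`, where
`z = exp(πiα₁/2)`, `w = z⁻¹`, `P` is the permutation matrix of `δ' ↦ -δ'` and
`B = A_s(α'; Θ') T`, with `T` the diagonal matrix of the phases `exp(πi/2 Σ_k δ_k θ_{k1})`.
Hence `det A_{s+1} = det (B (z + wP)) det (B (z - wP)) = det(B)² (z² - w²)^(2^s)` because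
`P² = 1`. Since `P T P = T⁻¹`, `det(T)² = 1`, and `z² - w² = 2i sin πα₁`, so
`det A_{s+1} = det(A_s)² (2i sin πα₁)^(2^s)`; the powers of `i` cancel once `s ≥ 2`.
-/

namespace Matrix

variable {R n : Type*} [CommRing R] [Fintype n] [DecidableEq n]

theorem det_fromBlocks_eq_det_add_mul_det_sub (M N : Matrix n n R) :
    (fromBlocks M N N M).det = (M + N).det * (M - N).det := by
  have h : fromBlocks M N N M =
      fromBlocks 1 0 1 1 * fromBlocks (M + N) N 0 (M - N) * fromBlocks 1 0 (-1) 1 := by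
    simp only [fromBlocks_multiply, Matrix.one_mul, Matrix.mul_one, Matrix.zero_mul,
      Matrix.mul_zero, add_zero, zero_add, Matrix.mul_neg, fromBlocks_inj]
    exact ⟨by abel, trivial, by abel, by abel⟩
  rw [h, det_mul, det_mul, det_fromBlocks_zero₂₁, det_fromBlocks_zero₁₂,
    det_fromBlocks_zero₁₂, det_one]
  ring

theorem det_smul_one_add_mul_det_smul_one_sub {P : Matrix n n R} (hP : P * P = 1) (z w : R) :
    (z • 1 + w • P).det * (z • 1 - w • P).det = (z ^ 2 - w ^ 2) ^ Fintype.card n := by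
  have h : (z • 1 + w • P) * (z • 1 - w • P) = (z ^ 2 - w ^ 2) • (1 : Matrix n n R) := by
    simp only [add_mul, mul_sub, smul_mul_smul_comm, Matrix.one_mul, Matrix.mul_one, hP,
      mul_comm w z, sub_smul, pow_two]
    abel
  rw [← det_mul, h, det_smul, det_one, mul_one]

end Matrix

theorem Finset.prod_sq_eq_one_of_perm {M ι : Type*} [CommMonoid M] [Fintype ι]
    (σ : Equiv.Perm ι) {f : ι → M} (hf : ∀ i, f (σ i) * f i = 1) : (∏ i, f i) ^ 2 = 1 := by
  rw [sq]
  nth_rewrite 1 [← Equiv.prod_comp σ f]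
  rw [← Finset.prod_mul_distrib]
  exact Finset.prod_eq_one fun i _ => hf i

namespace Complex

theorem exp_sq_sub_exp_neg_sq (x : ℂ) :
    exp (Real.pi * I / 2 * x) ^ 2 - exp (-(Real.pi * I / 2 * x)) ^ 2 =
      2 * I * sin (Real.pi * x) := by
  calc _ = 2 * sinh (Real.pi * x * I) := by
        rw [sinh, ← exp_nat_mul, ← exp_nat_mul]; ring_nf
    _ = _ := by rw [sinh_mul_I]; ring

theorem I_pow_two_pow {r : ℕ} (hr : 2 ≤ r) : I ^ 2 ^ r = 1 := by
  obtain ⟨k, rfl⟩ := Nat.exists_eq_add_of_le hr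
  rw [pow_add, pow_mul, show (2 : ℕ) ^ 2 = 4 by norm_num, I_pow_four, one_pow]

end Complex

namespace HomCone

def halvesEquiv (s : ℕ) : Fin (2 ^ s) ⊕ Fin (2 ^ s) ≃ Fin (2 ^ (s + 1)) :=
  finSumFinEquiv.trans (finCongr (by rw [pow_succ, mul_two]))

lemma ord_halvesEquiv_inl (s : ℕ) (i : Fin (2 ^ s)) :
    ord (s + 1) (halvesEquiv s (.inl i)) = Fin.cons 1 (ord s i) := by
  funext a
  induction a using Fin.cases <;> simp [ord, halvesEquiv]

lemma ord_halvesEquiv_inr (s : ℕ) (i : Fin (2 ^ s)) :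
    ord (s + 1) (halvesEquiv s (.inr i)) = Fin.cons (-1) (-ord s i) := by
  funext a
  induction a using Fin.cases <;> simp [ord, halvesEquiv]

def negPerm : (s : ℕ) → Equiv.Perm (Fin (2 ^ s))
  | 0 => Equiv.refl _
  | s + 1 => (halvesEquiv s).symm.trans ((Equiv.sumComm _ _).trans (halvesEquiv s))

lemma ord_negPerm (s : ℕ) (i : Fin (2 ^ s)) : ord s (negPerm s i) = -ord s i := by
  cases s with
  | zero => funext a; exact a.elim0
  | succ s =>
    obtain ⟨x, rfl⟩ := (halvesEquiv s).surjective i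
    rcases x with i | i <;> funext a <;> induction a using Fin.cases <;>
      simp [negPerm, ord_halvesEquiv_inl, ord_halvesEquiv_inr]

lemma negPerm_symm (s : ℕ) : (negPerm s).symm = negPerm s := by
  cases s with
  | zero => rfl
  | succ s => ext i; simp [negPerm]

lemma negPerm_mul_self (s : ℕ) : negPerm s * negPerm s = 1 := by
  have h := inv_mul_cancel (negPerm s)
  rwa [Equiv.Perm.inv_def, negPerm_symm] at h

def thetaPhase (s : ℕ) (Θ : Fin (s + 1) → Fin (s + 1) → ℝ) (δ : Fin (2 ^ s)) : ℂ :=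
  cexp (Real.pi * I / 2 * ∑ b : Fin s, (ord s δ b : ℂ) * (Θ b.succ 0 : ℂ))

lemma thetaPhase_negPerm_mul (s : ℕ) (Θ : Fin (s + 1) → Fin (s + 1) → ℝ) (δ : Fin (2 ^ s)) :
    thetaPhase s Θ (negPerm s δ) * thetaPhase s Θ δ = 1 := by
  simp only [thetaPhase, ← exp_add, ord_negPerm, Pi.neg_apply, Int.cast_neg, neg_mul,
    Finset.sum_neg_distrib, mul_neg, neg_add_cancel, exp_zero]

def tailBlock (s : ℕ) (α : Fin (s + 1) → ℂ) (Θ : Fin (s + 1) → Fin (s + 1) → ℝ) :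
    Matrix (Fin (2 ^ s)) (Fin (2 ^ s)) ℂ :=
  Amat s (Fin.tail α) (fun b a => Θ b.succ a.succ) * diagonal (thetaPhase s Θ)

lemma Amat_succ_submatrix_halvesEquiv (s : ℕ) (α : Fin (s + 1) → ℂ)
    (Θ : Fin (s + 1) → Fin (s + 1) → ℝ) :
    (Amat (s + 1) α Θ).submatrix (halvesEquiv s) (halvesEquiv s) =
      fromBlocks (cexp (Real.pi * I / 2 * α 0) • tailBlock s α Θ)
        (cexp (-(Real.pi * I / 2 * α 0)) • (tailBlock s α Θ * (negPerm s).permMatrix ℂ))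
        (cexp (-(Real.pi * I / 2 * α 0)) • (tailBlock s α Θ * (negPerm s).permMatrix ℂ))
        (cexp (Real.pi * I / 2 * α 0) • tailBlock s α Θ) := by
  rw [Equiv.Perm.permMatrix, PEquiv.mul_toMatrix_toPEquiv, negPerm_symm]
  ext (x | x) (y | y) <;>
    simp only [submatrix_apply, fromBlocks_apply₁₁, fromBlocks_apply₁₂, fromBlocks_apply₂₁,
      fromBlocks_apply₂₂, Matrix.smul_apply, smul_eq_mul, tailBlock, mul_diagonal, id, Amat,
      thetaPhase, ← exp_add] <;>
    congr 1 <;>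
    simp only [Fin.sum_univ_succ, ord_halvesEquiv_inl, ord_halvesEquiv_inr, ord_negPerm,
      Fin.cons_zero, Fin.cons_succ, Fin.tail, Pi.neg_apply, Fin.not_lt_zero, Fin.succ_pos,
      Fin.succ_lt_succ_iff, if_true, if_false, Int.cast_one, Int.cast_neg, Finset.sum_neg_distrib,
      neg_mul, mul_neg, one_mul, neg_neg, zero_add] <;>
    ring

lemma sq_det_tailBlock (s : ℕ) (α : Fin (s + 1) → ℂ) (Θ : Fin (s + 1) → Fin (s + 1) → ℝ) :
    (tailBlock s α Θ).det ^ 2 = (Amat s (Fin.tail α) (fun b a => Θ b.succ a.succ)).det ^ 2 := by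
  rw [tailBlock, det_mul, det_diagonal, mul_pow,
    Finset.prod_sq_eq_one_of_perm (negPerm s) (thetaPhase_negPerm_mul s Θ), mul_one]

lemma det_Amat_succ (s : ℕ) (α : Fin (s + 1) → ℂ) (Θ : Fin (s + 1) → Fin (s + 1) → ℝ) :
    (Amat (s + 1) α Θ).det = (Amat s (Fin.tail α) (fun b a => Θ b.succ a.succ)).det ^ 2 *
      (2 * I * sin (Real.pi * α 0)) ^ 2 ^ s := by
  set z := cexp (Real.pi * I / 2 * α 0)
  set w := cexp (-(Real.pi * I / 2 * α 0))
  set B := tailBlock s α Θ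
  set P := (negPerm s).permMatrix ℂ
  have hP : P * P = 1 := by rw [← permMatrix_mul, negPerm_mul_self, permMatrix_one]
  have hsum : z • B + w • (B * P) = B * (z • 1 + w • P) := by
    rw [mul_add, Matrix.mul_smul, Matrix.mul_smul, mul_one]
  have hdiff : z • B - w • (B * P) = B * (z • 1 - w • P) := by
    rw [mul_sub, Matrix.mul_smul, Matrix.mul_smul, mul_one]
  rw [← det_submatrix_equiv_self (halvesEquiv s), Amat_succ_submatrix_halvesEquiv,
    det_fromBlocks_eq_det_add_mul_det_sub, hsum, hdiff, det_mul, det_mul,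
    mul_mul_mul_comm, ← sq, det_smul_one_add_mul_det_smul_one_sub hP, sq_det_tailBlock,
    Fintype.card_fin, exp_sq_sub_exp_neg_sq]

lemma det_Amat_zero (α : Fin 0 → ℂ) (Θ : Fin 0 → Fin 0 → ℝ) : (Amat 0 α Θ).det = 1 := by
  simp [Amat]

theorem det_Amat_eq_prod_sin {r : ℕ} (hr : 2 ≤ r) (α : Fin r → ℂ) (Θ : Fin r → Fin r → ℝ) :
    (Amat r α Θ).det = ∏ j, (2 * sin (Real.pi * α j)) ^ 2 ^ (r - 1) := by
  induction r, hr using Nat.le_induction with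
  | base =>
    rw [det_Amat_succ, det_Amat_succ, det_Amat_zero, Fin.prod_univ_two]
    simp only [Fin.tail, Fin.succ_zero_eq_one]
    ring_nf
    rw [I_pow_four]
    ring
  | succ r hr ih =>
    have hI : (2 * I * sin (Real.pi * α 0)) ^ 2 ^ r = (2 * sin (Real.pi * α 0)) ^ 2 ^ r := by
      rw [mul_right_comm, mul_pow, I_pow_two_pow hr, mul_one]
    have hexp : 2 ^ (r - 1) * 2 = 2 ^ r := by rw [← pow_succ, Nat.sub_add_cancel (by omega)]
    rw [det_Amat_succ, ih, hI, Fin.prod_univ_succ, ← Finset.prod_pow, Nat.add_sub_cancel,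
      mul_comm]
    simp only [← pow_mul, hexp, Fin.tail]

/-- for `r ≥ 2`, `det A_r(α;Θ) = Π_{j=1}^r (2 sin πα_j)^(2^(r-1))`
(in particular independent of `Θ`), and consequently
`det Ã_r(α;Θ) = (Γ(α)/(2π)^{|α|})^(2^r) · (Π_{j=1}^r 2 sin πα_j)^(2^(r-1))`,
where `Ã_r(α;Θ) = (Γ(α)/(2π)^{|α|}) · A_r(α;Θ)`. -/
theorem statement8 (r : ℕ) (hr : 2 ≤ r) (α : Fin r → ℂ) (Θ : Fin r → Fin r → ℝ) :
    (Amat r α Θ).det = (∏ j, (2 * Complex.sin (Real.pi * α j)) ^ 2 ^ (r - 1)) ∧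
    (((∏ j, Complex.Gamma (α j)) / (2 * Real.pi : ℂ) ^ (∑ j, α j)) • Amat r α Θ).det =
      ((∏ j, Complex.Gamma (α j)) / (2 * Real.pi : ℂ) ^ (∑ j, α j)) ^ 2 ^ r *
        (∏ j, 2 * Complex.sin (Real.pi * α j)) ^ 2 ^ (r - 1) := by
  have hdet := det_Amat_eq_prod_sin hr α Θ
  refine ⟨hdet, ?_⟩
  rw [Matrix.det_smul, hdet, Fintype.card_fin, Finset.prod_pow]

end HomCone
end
end

section
/- For r ≥ 2, 2 ≤ j ≤ r, and α ∈ ℂ: (det D_j^(r)(α))² = (c(α)·s(α))^{2^{r-1}}. -/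
/-!
Common definitions for zeta functions associated with homogeneous cones
(following Nakashima, "Functional equations of zeta functions associated
with homogeneous cones"): the functions `c(z) = cos (π z / 2)`,
`s(z) = sin (π z / 2)`, the recursive ordering of the sign set
`I_r = {1,-1}^r`, the Hadamard matrices `J^(r)`, the gamma-matrix
`A_r(α; Θ)`, the matrices `C_r`, `S_r`, the diagonal matrices `D_j^(r)(α)`,
and the rotation matrices `P_{kj}^(r)(θ) = c(θ)·I + s(θ)·X_{kj}^(r)`.
Matrices indexed by `I_s` are identified with `2^s × 2^s` matrices via the
recursive ordering, which is encoded by `ord s : Fin (2^s) → (Fin s → ℤ)`,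
sending a position to the corresponding sign vector.
-/

noncomputable section
open Matrix Complex

namespace HomCone

/-! Splitting the index range in half writes the product of the diagonal entries of
`D_j^(r)` (`j ≥ 3`) as the square of that of `D_{j-1}^(r-1)`, so the exponent doubles
with `r`. For `j = 2` the halves are `D_1^(r-1)(α)` and `D_1^(r-1)(α+1)`, and
`c(α+1) = -s(α)`, `s(α+1) = c(α)` turn their product into `±(c(α) s(α))^(2^(r-2))`. -/

lemma cc_add_one (z : ℂ) : cc (z + 1) = -ss z := by
  rw [cc, ss, mul_add, mul_one, add_div, Complex.cos_add_pi_div_two]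

lemma ss_add_one (z : ℂ) : ss (z + 1) = cc z := by
  rw [cc, ss, mul_add, mul_one, add_div, Complex.sin_add_pi_div_two]

lemma prod_dite_two_pow_succ {M : Type*} [CommMonoid M] (m : ℕ) (f g : Fin (2 ^ m) → M) :
    ∏ i : Fin (2 ^ (m + 1)),
      (if h : (i : ℕ) < 2 ^ m then f ⟨i, h⟩
       else g ⟨i - 2 ^ m, by have := i.isLt; have := pow_succ 2 m; omega⟩) =
      (∏ i, f i) * ∏ i, g i := by
  rw [← Fin.prod_congr' _ (by rw [pow_succ, mul_two] : 2 ^ m + 2 ^ m = 2 ^ (m + 1)),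
    Fin.prod_univ_add]
  congr 1 <;> exact Finset.prod_congr rfl fun i _ => by simp

lemma prod_dEnt_one (n : ℕ) (α : ℂ) :
    ∏ i, dEnt (n + 2) 1 α i = cc α ^ 2 ^ n * ss α ^ 2 ^ n := by
  have := prod_dite_two_pow_succ n (fun _ => cc α) (fun _ => ss α)
  simp only [dite_eq_ite, Finset.prod_const, Finset.card_univ, Fintype.card_fin] at this
  exact this

lemma prod_dEnt_two (n : ℕ) (α : ℂ) :
    ∏ i, dEnt (n + 2) 2 α i =
      (∏ i, dEnt (n + 1) 1 α i) * ∏ i, dEnt (n + 1) 1 (α + 1) i :=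
  prod_dite_two_pow_succ n (dEnt (n + 1) 1 α) (dEnt (n + 1) 1 (α + 1))

lemma sq_prod_dEnt_two (n : ℕ) (α : ℂ) :
    (∏ i, dEnt (n + 2) 2 α i) ^ 2 = (cc α * ss α) ^ 2 ^ (n + 1) := by
  rw [prod_dEnt_two]
  cases n with
  | zero =>
    have hprod (z : ℂ) : ∏ i, dEnt 1 1 z i = cc z := by simp [dEnt]
    rw [hprod, hprod, cc_add_one]
    ring
  | succ n =>
    have hsign : ((-1 : ℂ) ^ 2 ^ n) ^ 2 = 1 := by rw [pow_right_comm, neg_one_sq, one_pow]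
    rw [prod_dEnt_one, prod_dEnt_one, cc_add_one, ss_add_one, neg_pow]
    linear_combination (cc α * ss α) ^ 2 ^ (n + 2) * hsign

lemma prod_dEnt_succ_succ (n d : ℕ) (α : ℂ) :
    ∏ i, dEnt (n + 3) (d + 3) α i = (∏ i, dEnt (n + 2) (d + 2) α i) ^ 2 :=
  (prod_dite_two_pow_succ (n + 1) (dEnt (n + 2) (d + 2) α) (dEnt (n + 2) (d + 2) α)).trans
    (sq _).symm

lemma sq_prod_dEnt (n j : ℕ) (hj : 2 ≤ j) (hjn : j ≤ n + 2) (α : ℂ) :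
    (∏ i, dEnt (n + 2) j α i) ^ 2 = (cc α * ss α) ^ 2 ^ (n + 1) := by
  induction n generalizing j with
  | zero =>
    obtain rfl : j = 2 := by omega
    exact sq_prod_dEnt_two 0 α
  | succ n ih =>
    obtain rfl | hj3 := hj.eq_or_lt
    · exact sq_prod_dEnt_two (n + 1) α
    obtain ⟨d, rfl⟩ : ∃ d, j = d + 3 := ⟨j - 3, by omega⟩
    rw [prod_dEnt_succ_succ, ← pow_mul, pow_mul', ih (d + 2) (by omega) (by omega), ← pow_mul,
      ← pow_succ]

theorem statement10_general (r j : ℕ) (hj2 : 2 ≤ j) (hjr : j ≤ r) (α : ℂ) :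
    (Dmat r j α).det ^ 2 = (cc α * ss α) ^ 2 ^ (r - 1) := by
  obtain ⟨n, rfl⟩ : ∃ n, r = n + 2 := ⟨r - 2, by omega⟩
  rw [Dmat, det_diagonal]
  exact sq_prod_dEnt n j hj2 hjr α

/-- for `r ≥ 2` and `2 ≤ j ≤ r`,
`(det D_j^(r)(α))² = (c(α)s(α))^(2^(r-1))`. -/
theorem statement10 (r j : ℕ) (hr : 2 ≤ r) (hj2 : 2 ≤ j) (hjr : j ≤ r) (α : ℂ) :
    (Dmat r j α).det ^ 2 = (cc α * ss α) ^ 2 ^ (r - 1) :=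
  statement10_general r j hj2 hjr α

end HomCone
end
end

section
/- Let r ≥ 1 and α ∈ ℂ^r. Let M(α) be the matrix with rows and columns indexed by {1,-1}^r whose (ε,δ) entry is exp((π√-1/2) · Σ_{j=1}^r ε_j δ_j α_j), and for a ∈ {0,1}^r let k_a be the vector indexed by {1,-1}^r with ε-entry Π_{j=1}^r ε_j^{a_j}. Then M(α) · k_a = 2^r · (√-1)^{|a|} · (Π_{j=1}^r c(α_j - a_j)) · k_a, where |a| = a₁ + ⋯ + a_r; moreover, the 2^r vectors k_a (a ∈ {0,1}^r) are pairwise orthogonal, so they form an eigenbasis diagonalizing M(α). -/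
/-!
Common definitions for zeta functions associated with homogeneous cones
(following Nakashima, "Functional equations of zeta functions associated
with homogeneous cones"): the functions `c(z) = cos (π z / 2)`,
`s(z) = sin (π z / 2)`, the recursive ordering of the sign set
`I_r = {1,-1}^r`, the Hadamard matrices `J^(r)`, the gamma-matrix
`A_r(α; Θ)`, the matrices `C_r`, `S_r`, the diagonal matrices `D_j^(r)(α)`,
and the rotation matrices `P_{kj}^(r)(θ) = c(θ)·I + s(θ)·X_{kj}^(r)`.
Matrices indexed by `I_s` are identified with `2^s × 2^s` matrices via the
recursive ordering, which is encoded by `ord s : Fin (2^s) → (Fin s → ℤ)`,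
sending a position to the corresponding sign vector.
-/

noncomputable section
open Matrix Complex

namespace HomCone

/-- The matrix `M(α)` with rows and columns indexed by `{1,-1}^r`, whose
`(ε, δ)` entry is `exp((π√-1/2) Σ_j ε_j δ_j α_j)`. -/
def Mmat (r : ℕ) (α : Fin r → ℂ) :
    Matrix (Fin r → ({1, -1} : Finset ℤ)) (Fin r → ({1, -1} : Finset ℤ)) ℂ :=
  fun ε δ => Complex.exp (Real.pi * Complex.I / 2 *
    ∑ j, ((ε j : ℤ) : ℂ) * ((δ j : ℤ) : ℂ) * α j)

/-- The vector `k_a` indexed by `{1,-1}^r` with `ε`-entry `Π_j ε_j^{a_j}`. -/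
def kvec (r : ℕ) (a : Fin r → Fin 2) : (Fin r → ({1, -1} : Finset ℤ)) → ℂ :=
  fun ε => ∏ j, ((ε j : ℤ) : ℂ) ^ ((a j : ℕ))

/-!
`M(α)` is the Kronecker product over `j` of the `2 × 2` matrices
`(exp (π√-1 ε δ α_j / 2))_{ε, δ = ±1}`, and `k_a` is the tensor product of the vectors
`(ε^{a_j})_{ε = ±1}`; formally, a sum over `{1,-1}^r` of a product of functions of the single
coordinates factors as a product of sums over `{1,-1}` (`Fintype.prod_sum`). Everything thus
reduces to `r = 1`, where `(1, 1)` and `(1, -1)` are orthogonal eigenvectors with eigenvalues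
`2 c(α)` and `2 √-1 s(α) = 2 √-1 c(α - 1)`.
-/

local notation "𝕊" => ({1, -1} : Finset ℤ)

lemma sum_signs {M : Type*} [AddCommMonoid M] (f : ℤ → M) :
    ∑ x : 𝕊, f x = f 1 + f (-1) := by
  rw [Finset.sum_coe_sort 𝕊 f, Finset.sum_pair (by decide)]

lemma sign_eq_one_or_neg_one (x : 𝕊) : (x : ℤ) = 1 ∨ (x : ℤ) = -1 := by
  simpa only [Finset.mem_insert, Finset.mem_singleton] using x.2

lemma cc_sub_one (z : ℂ) : cc (z - 1) = ss z := by
  rw [cc, ss, mul_sub, mul_one, sub_div, Complex.cos_sub_pi_div_two]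

lemma sum_signs_exp_mul_pow (a : Fin 2) (z : ℂ) {e : ℤ} (he : e = 1 ∨ e = -1) :
    ∑ x : 𝕊, exp (Real.pi * I / 2 * ((e : ℂ) * ((x : ℤ) : ℂ) * z)) * ((x : ℤ) : ℂ) ^ (a : ℕ) =
      2 * I ^ (a : ℕ) * cc (z - (a : ℕ)) * (e : ℂ) ^ (a : ℕ) := by
  rw [sum_signs fun y : ℤ => exp (Real.pi * I / 2 * ((e : ℂ) * (y : ℂ) * z)) * (y : ℂ) ^ (a : ℕ)]
  have hθ (s : ℂ) : Real.pi * I / 2 * (s * z) = s * (Real.pi * z / 2) * I := by ring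
  fin_cases a <;> rcases he with rfl | rfl <;>
    simp only [hθ, exp_mul_I] <;> simp [cc_sub_one] <;> simp [cc, ss] <;> ring

lemma sum_signs_pow_mul_pow_of_ne {b b' : Fin 2} (h : b ≠ b') :
    ∑ x : 𝕊, ((x : ℤ) : ℂ) ^ (b : ℕ) * ((x : ℤ) : ℂ) ^ (b' : ℕ) = 0 := by
  rw [sum_signs fun y : ℤ => (y : ℂ) ^ (b : ℕ) * (y : ℂ) ^ (b' : ℕ)]
  fin_cases b <;> fin_cases b' <;> simp_all

variable {r : ℕ}

lemma Mmat_mul_kvec_apply (α : Fin r → ℂ) (a : Fin r → Fin 2) (ε δ : Fin r → 𝕊) :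
    Mmat r α ε δ * kvec r a δ =
      ∏ j, exp (Real.pi * I / 2 * (((ε j : ℤ) : ℂ) * ((δ j : ℤ) : ℂ) * α j)) *
        ((δ j : ℤ) : ℂ) ^ (a j : ℕ) := by
  rw [Mmat, kvec, Finset.mul_sum, exp_sum, ← Finset.prod_mul_distrib]

theorem Mmat_mulVec_kvec (α : Fin r → ℂ) (a : Fin r → Fin 2) :
    (Mmat r α).mulVec (kvec r a) =
      ((2 : ℂ) ^ r * I ^ (∑ j, (a j : ℕ)) * ∏ j, cc (α j - (a j : ℕ))) • kvec r a := by
  ext ε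
  calc (Mmat r α).mulVec (kvec r a) ε
      = ∏ j, ∑ x : 𝕊, exp (Real.pi * I / 2 * (((ε j : ℤ) : ℂ) * ((x : ℤ) : ℂ) * α j)) *
          ((x : ℤ) : ℂ) ^ (a j : ℕ) := by
        simp only [mulVec, dotProduct, Mmat_mul_kvec_apply, Fintype.prod_sum]
    _ = ∏ j, 2 * I ^ (a j : ℕ) * cc (α j - (a j : ℕ)) * ((ε j : ℤ) : ℂ) ^ (a j : ℕ) :=
        Finset.prod_congr rfl fun j _ =>
          sum_signs_exp_mul_pow (a j) (α j) (sign_eq_one_or_neg_one (ε j))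
    _ = _ := by
        simp only [Finset.prod_mul_distrib, Finset.prod_const, Finset.prod_pow_eq_pow_sum,
          Finset.card_univ, Fintype.card_fin, Pi.smul_apply, smul_eq_mul, kvec]

theorem kvec_dotProduct_kvec_of_ne {a a' : Fin r → Fin 2} (h : a ≠ a') :
    kvec r a ⬝ᵥ kvec r a' = 0 := by
  obtain ⟨j, hj⟩ := Function.ne_iff.mp h
  calc kvec r a ⬝ᵥ kvec r a'
      = ∏ i, ∑ x : 𝕊, ((x : ℤ) : ℂ) ^ (a i : ℕ) * ((x : ℤ) : ℂ) ^ (a' i : ℕ) := by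
        simp only [dotProduct, kvec, ← Finset.prod_mul_distrib, Fintype.prod_sum]
    _ = 0 := Finset.prod_eq_zero (Finset.mem_univ j) (sum_signs_pow_mul_pow_of_ne hj)

theorem statement14_general (r : ℕ) (α : Fin r → ℂ) :
    (∀ a : Fin r → Fin 2,
      (Mmat r α).mulVec (kvec r a) =
        ((2 : ℂ) ^ r * Complex.I ^ (∑ j, ((a j : ℕ))) *
          ∏ j, cc (α j - ((a j : ℕ) : ℂ))) • kvec r a) ∧
    Pairwise fun a a' : Fin r → Fin 2 => kvec r a ⬝ᵥ kvec r a' = 0 :=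
  ⟨Mmat_mulVec_kvec α, fun _ _ => kvec_dotProduct_kvec_of_ne⟩

/-- each `k_a` (`a ∈ {0,1}^r`) is an eigenvector of `M(α)` with
eigenvalue `2^r (√-1)^{|a|} Π_j c(α_j - a_j)`, and the `2^r` vectors `k_a`
are pairwise orthogonal; hence they form an eigenbasis diagonalizing `M(α)`. -/
theorem statement14 (r : ℕ) (hr : 1 ≤ r) (α : Fin r → ℂ) :
    (∀ a : Fin r → Fin 2,
      (Mmat r α).mulVec (kvec r a) =
        ((2 : ℂ) ^ r * Complex.I ^ (∑ j, ((a j : ℕ))) *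
          ∏ j, cc (α j - ((a j : ℕ) : ℂ))) • kvec r a) ∧
    Pairwise fun a a' : Fin r → Fin 2 => kvec r a ⬝ᵥ kvec r a' = 0 :=
  statement14_general r α

end HomCone
end
end

section
/- Let a ∈ {0,1} and let z ∈ ℂ be such that z is not a nonpositive integer and (1-z+a)/2 is not a nonpositive integer. Then Γ(z) · cos(π(z-a)/2) = (2^z · √π / 2) · Γ((z+a)/2) / Γ((1-z+a)/2). -/
/-!
Common definitions for zeta functions associated with homogeneous cones
(following Nakashima, "Functional equations of zeta functions associated
with homogeneous cones"): the functions `c(z) = cos (π z / 2)`,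
`s(z) = sin (π z / 2)`, the recursive ordering of the sign set
`I_r = {1,-1}^r`, the Hadamard matrices `J^(r)`, the gamma-matrix
`A_r(α; Θ)`, the matrices `C_r`, `S_r`, the diagonal matrices `D_j^(r)(α)`,
and the rotation matrices `P_{kj}^(r)(θ) = c(θ)·I + s(θ)·X_{kj}^(r)`.
Matrices indexed by `I_s` are identified with `2^s × 2^s` matrices via the
recursive ordering, which is encoded by `ord s : Fin (2^s) → (Fin s → ℤ)`,
sending a position to the corresponding sign vector.
-/

noncomputable section
open Matrix Complex

/-!
Put `w = (z + 1 - a) / 2`. For `a ∈ {0, 1}` the numbers `(z + a) / 2` and `w` are `z / 2` and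
`(z + 1) / 2` in some order, so Legendre's duplication formula gives
`Γ z √π = 2 ^ (z - 1) Γ((z + a) / 2) Γ w`. Euler's reflection formula gives
`Γ w Γ (1 - w) sin (π w) = π` with `1 - w = (1 - z + a) / 2`, and `sin (π w) = cos (π (z - a) / 2)`.
-/

namespace Complex

open Real

theorem Gamma_mul_Gamma_one_sub_mul_sin {w : ℂ} (hw : Gamma w * Gamma (1 - w) ≠ 0) :
    Gamma w * Gamma (1 - w) * sin (π * w) = π := by
  have hsin : sin (π * w) ≠ 0 := fun h ↦ hw (by rw [Gamma_mul_Gamma_one_sub, h, div_zero])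
  rw [Gamma_mul_Gamma_one_sub, div_mul_cancel₀ _ hsin]

theorem Gamma_mul_sqrt_pi (z : ℂ) :
    Gamma z * √π = 2 ^ (z - 1) * Gamma (z / 2) * Gamma ((z + 1) / 2) := by
  have hdup := Gamma_mul_Gamma_add_half (z / 2)
  rw [mul_div_cancel₀ z two_ne_zero, ← add_div] at hdup
  have hpow : (2 : ℂ) ^ (z - 1) * 2 ^ (1 - z) = 1 := by
    rw [← cpow_add _ _ two_ne_zero, sub_add_sub_cancel', sub_self, cpow_zero]
  rw [mul_assoc _ (Gamma _), hdup]
  linear_combination (-(Gamma z * √π)) * hpow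

end Complex

namespace HomCone

/-- for `a ∈ {0,1}` and `z ∈ ℂ` such that `z` is not a
nonpositive integer and `(1-z+a)/2` is not a nonpositive integer,
`Γ(z) cos(π(z-a)/2) = (2^z √π / 2) · Γ((z+a)/2) / Γ((1-z+a)/2)`. -/
theorem statement15 (a : ℕ) (ha : a = 0 ∨ a = 1) (z : ℂ)
    (hz : ∀ n : ℕ, z ≠ -(n : ℂ)) (hz' : ∀ n : ℕ, (1 - z + (a : ℂ)) / 2 ≠ -(n : ℂ)) :
    Complex.Gamma z * Complex.cos (Real.pi * (z - (a : ℂ)) / 2) =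
      (2 : ℂ) ^ z * (Real.sqrt Real.pi : ℂ) / 2 *
        Complex.Gamma ((z + (a : ℂ)) / 2) / Complex.Gamma ((1 - z + (a : ℂ)) / 2) := by
  set w : ℂ := (z + 1 - a) / 2
  have hsqrt : ((√Real.pi : ℝ) : ℂ) ≠ 0 :=
    ofReal_ne_zero.mpr (Real.sqrt_pos.mpr Real.pi_pos).ne'
  have hdup : Gamma z * √Real.pi = 2 ^ (z - 1) * Gamma ((z + a) / 2) * Gamma w := by
    rcases ha with rfl | rfl
    · simpa [w] using Gamma_mul_sqrt_pi z
    · simp only [w, Nat.cast_one, add_sub_cancel_right, Gamma_mul_sqrt_pi z]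
      ring
  -- `Γ w` cannot vanish, since by duplication it divides `Γ z √π ≠ 0`
  have hΓw : Gamma w ≠ 0 := right_ne_zero_of_mul (hdup ▸ mul_ne_zero (Gamma_ne_zero hz) hsqrt)
  have hΓ' : Gamma ((1 - z + a) / 2) ≠ 0 := Gamma_ne_zero hz'
  have hrefl : Gamma w * Gamma ((1 - z + a) / 2) * sin (Real.pi * w) = Real.pi := by
    have h1w : 1 - w = (1 - z + a) / 2 := by ring
    rw [← h1w] at hΓ' ⊢
    exact Gamma_mul_Gamma_one_sub_mul_sin (mul_ne_zero hΓw hΓ')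
  have htrig : cos (Real.pi * (z - a) / 2) = sin (Real.pi * w) := by
    rw [← sin_add_pi_div_two]
    congr 1
    ring
  rw [htrig, eq_div_iff hΓ']
  have hpow : (2 : ℂ) ^ (z - 1) = 2 ^ z / 2 := by rw [cpow_sub _ _ two_ne_zero, cpow_one]
  have hpi : ((√Real.pi : ℝ) : ℂ) * √Real.pi = Real.pi := by
    rw [← ofReal_mul, Real.mul_self_sqrt Real.pi_pos.le]
  apply mul_right_cancel₀ hsqrt
  linear_combination (sin (Real.pi * w) * Gamma ((1 - z + a) / 2)) * hdup
    + 2 ^ (z - 1) * Gamma ((z + a) / 2) * hrefl + Gamma ((z + a) / 2) * Real.pi * hpow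
    - 2 ^ z / 2 * Gamma ((z + a) / 2) * hpi

end HomCone
end
end

section
/- Let r ≥ 2 and let n_{kj} (1 ≤ j < k ≤ r) be nonnegative integers; put p_k = Σ_{j<k} n_{kj} and q_j = Σ_{k>j} n_{kj}. Then the following are equivalent: (i) there exists m ∈ {0,1} such that Σ_{1≤j<k≤r} ε_j δ_k n_{kj} ≡ 4m (mod 8) for all ε, δ ∈ {1,-1}^r; (ii) every n_{kj} is even, and every p_k (1 ≤ k ≤ r) and every q_j (1 ≤ j ≤ r) is divisible by 4. -/
/-!
Common definitions for zeta functions associated with homogeneous cones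
(following Nakashima, "Functional equations of zeta functions associated
with homogeneous cones"): the functions `c(z) = cos (π z / 2)`,
`s(z) = sin (π z / 2)`, the recursive ordering of the sign set
`I_r = {1,-1}^r`, the Hadamard matrices `J^(r)`, the gamma-matrix
`A_r(α; Θ)`, the matrices `C_r`, `S_r`, the diagonal matrices `D_j^(r)(α)`,
and the rotation matrices `P_{kj}^(r)(θ) = c(θ)·I + s(θ)·X_{kj}^(r)`.
Matrices indexed by `I_s` are identified with `2^s × 2^s` matrices via the
recursive ordering, which is encoded by `ord s : Fin (2^s) → (Fin s → ℤ)`,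
sending a position to the corresponding sign vector.
-/

noncomputable section
open Matrix Complex

/-!
Write `S(ε, δ) = Σ_{j,k} ε_j δ_k a_{jk}` and `ε = 1 - d`, `δ = 1 - e`. Then
`S(1, 1) - S(ε, δ) = Σ_j d_j R_j + Σ_k e_k C_k - Σ_{j,k} d_j e_k a_{jk}` with row sums `R_j`
and column sums `C_k`, and `d, e` range over vectors with entries in `{0, 2}`. If all `a_{jk}`
are even and all `R_j, C_k` are divisible by `4`, every term is divisible by `8`. Conversely,
taking `d, e` zero or supported at a single index isolates `2 R_j`, `2 C_k` and
`2 R_j + 2 C_k - 4 a_{jk}`. For `a_{jk} = n_{kj}` when `j < k` (and `0` otherwise) the row and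
column sums are `q_j` and `p_k`, and `S(1, 1) = Σ_k p_k` is divisible by `4`.
-/

namespace HomCone

theorem two_dvd_one_sub_of_sign {x : ℤ} (hx : x = 1 ∨ x = -1) : 2 ∣ 1 - x := by
  rcases hx with rfl | rfl <;> norm_num

theorem sign_one_sub_single {ι : Type*} [DecidableEq ι] (i j : ι) :
    (1 - Pi.single i 2 : ι → ℤ) j = 1 ∨ (1 - Pi.single i 2 : ι → ℤ) j = -1 := by
  by_cases h : j = i
  · subst h; right; simp
  · left; simp [h]

section SignedSum

variable {ι κ : Type*} [Fintype ι] [Fintype κ] (a : ι → κ → ℤ)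

def signedSum (ε : ι → ℤ) (δ : κ → ℤ) : ℤ := ∑ j, ∑ k, ε j * δ k * a j k

theorem signedSum_one_one : signedSum a 1 1 = ∑ j, ∑ k, a j k := by
  simp [signedSum]

theorem signedSum_one_one_sub_signedSum (d : ι → ℤ) (e : κ → ℤ) :
    signedSum a 1 1 - signedSum a (1 - d) (1 - e) =
      ∑ j, d j * ∑ k, a j k + ∑ k, e k * ∑ j, a j k - ∑ j, ∑ k, d j * e k * a j k := by
  simp only [signedSum, Finset.mul_sum, ← Finset.sum_sub_distrib]
  rw [Finset.sum_comm (f := fun k j => e k * a j k), ← Finset.sum_add_distrib,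
    ← Finset.sum_sub_distrib]
  refine Finset.sum_congr rfl fun j _ => ?_
  rw [← Finset.sum_add_distrib, ← Finset.sum_sub_distrib]
  refine Finset.sum_congr rfl fun k _ => ?_
  simp only [Pi.one_apply, Pi.sub_apply]
  ring

theorem signedSum_modEq_of_dvd (heven : ∀ j k, 2 ∣ a j k) (hrow : ∀ j, 4 ∣ ∑ k, a j k)
    (hcol : ∀ k, 4 ∣ ∑ j, a j k) (ε : ι → ℤ) (δ : κ → ℤ)
    (hε : ∀ i, ε i = 1 ∨ ε i = -1) (hδ : ∀ i, δ i = 1 ∨ δ i = -1) :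
    signedSum a ε δ ≡ signedSum a 1 1 [ZMOD 8] := by
  have hd : ∀ j, 2 ∣ (1 - ε) j := fun j => two_dvd_one_sub_of_sign (hε j)
  have he : ∀ k, 2 ∣ (1 - δ) k := fun k => two_dvd_one_sub_of_sign (hδ k)
  rw [Int.modEq_iff_dvd, ← sub_sub_cancel 1 ε, ← sub_sub_cancel 1 δ,
    signedSum_one_one_sub_signedSum]
  refine dvd_sub (dvd_add ?_ ?_) ?_
  · exact Finset.dvd_sum fun j _ => mul_dvd_mul (hd j) (hrow j)
  · exact Finset.dvd_sum fun k _ => mul_dvd_mul (he k) (hcol k)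
  · exact Finset.dvd_sum fun j _ => Finset.dvd_sum fun k _ =>
      mul_dvd_mul (mul_dvd_mul (hd j) (he k)) (heven j k)

variable [DecidableEq ι] [DecidableEq κ]

theorem dvd_of_signedSum_modEq
    (h : ∀ ε δ, (∀ i, ε i = 1 ∨ ε i = -1) → (∀ i, δ i = 1 ∨ δ i = -1) →
      signedSum a ε δ ≡ signedSum a 1 1 [ZMOD 8]) :
    (∀ j k, 2 ∣ a j k) ∧ (∀ j, 4 ∣ ∑ k, a j k) ∧ (∀ k, 4 ∣ ∑ j, a j k) := by
  have key : ∀ (d : ι → ℤ) (e : κ → ℤ), (∀ i, (1 - d) i = 1 ∨ (1 - d) i = -1) →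
      (∀ i, (1 - e) i = 1 ∨ (1 - e) i = -1) →
      8 ∣ ∑ j, d j * ∑ k, a j k + ∑ k, e k * ∑ j, a j k - ∑ j, ∑ k, d j * e k * a j k :=
    fun d e hd he => signedSum_one_one_sub_signedSum a d e ▸ (h _ _ hd he).dvd
  have hrow : ∀ j, 4 ∣ ∑ k, a j k := fun j => by
    have := key (Pi.single j 2) 0 (sign_one_sub_single j) fun _ => Or.inl (by simp)
    simp only [Pi.single_apply, ite_mul, zero_mul, Finset.sum_ite_eq', Finset.mem_univ,
      if_true, Pi.zero_apply, mul_zero, Finset.sum_const_zero, add_zero, sub_zero] at this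
    omega
  have hcol : ∀ k, 4 ∣ ∑ j, a j k := fun k => by
    have := key 0 (Pi.single k 2) (fun _ => Or.inl (by simp)) (sign_one_sub_single k)
    simp only [Pi.single_apply, ite_mul, zero_mul, Finset.sum_ite_eq', Finset.mem_univ,
      if_true, Pi.zero_apply, zero_mul, Finset.sum_const_zero, zero_add, sub_zero] at this
    omega
  refine ⟨fun j k => ?_, hrow, hcol⟩
  have := key (Pi.single j 2) (Pi.single k 2) (sign_one_sub_single j) (sign_one_sub_single k)
  simp only [Pi.single_apply, ite_mul, mul_ite, zero_mul, mul_zero, Finset.sum_ite_eq',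
    Finset.mem_univ, if_true] at this
  have := hrow j
  have := hcol k
  omega

end SignedSum

theorem exists_modEq_four_mul {N : ℤ} (h : 4 ∣ N) :
    ∃ m : ℕ, m ≤ 1 ∧ N ≡ 4 * (m : ℤ) [ZMOD 8] := by
  obtain ⟨t, rfl⟩ := h
  refine ⟨(t % 2).toNat, by omega, ?_⟩
  rw [Int.modEq_iff_dvd]
  omega

section StrictUpper

variable {ι : Type*} [LinearOrder ι] (n : ι → ι → ℕ)

def strictUpper (j k : ι) : ℤ := if j < k then (n k j : ℤ) else 0

theorem two_dvd_strictUpper_iff (j k : ι) : 2 ∣ strictUpper n j k ↔ (j < k → 2 ∣ n k j) := by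
  by_cases hjk : j < k
  · simp only [strictUpper, hjk, if_true, true_implies]
    norm_cast
  · simp [strictUpper, hjk]

variable [Fintype ι]

theorem signedSum_strictUpper (ε δ : ι → ℤ) :
    signedSum (strictUpper n) ε δ = ∑ j, ∑ k, if j < k then ε j * δ k * (n k j : ℤ) else 0 := by
  simp only [signedSum, strictUpper, mul_ite, mul_zero]

theorem sum_strictUpper_row (j : ι) :
    ∑ k, strictUpper n j k = ((∑ k ∈ Finset.univ.filter (j < ·), n k j : ℕ) : ℤ) := by
  simp only [strictUpper, Nat.cast_sum, Finset.sum_filter, Nat.cast_ite, Nat.cast_zero]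

theorem sum_strictUpper_col (k : ι) :
    ∑ j, strictUpper n j k = ((∑ j ∈ Finset.univ.filter (· < k), n k j : ℕ) : ℤ) := by
  simp only [strictUpper, Nat.cast_sum, Finset.sum_filter, Nat.cast_ite, Nat.cast_zero]

end StrictUpper

theorem statement18_general (r : ℕ) (n : Fin r → Fin r → ℕ) :
    (∃ m : ℕ, m ≤ 1 ∧ ∀ ε δ : Fin r → ℤ,
        (∀ i, ε i = 1 ∨ ε i = -1) → (∀ i, δ i = 1 ∨ δ i = -1) →
        (∑ j, ∑ k, if j < k then ε j * δ k * (n k j : ℤ) else 0) ≡ 4 * (m : ℤ) [ZMOD 8]) ↔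
      ((∀ j k : Fin r, j < k → 2 ∣ n k j) ∧
        (∀ k : Fin r, 4 ∣ ∑ j ∈ Finset.univ.filter (· < k), n k j) ∧
        (∀ j : Fin r, 4 ∣ ∑ k ∈ Finset.univ.filter (j < ·), n k j)) := by
  simp only [← two_dvd_strictUpper_iff]
  simp only [← signedSum_strictUpper, ← Int.natCast_dvd_natCast, Nat.cast_ofNat,
    ← sum_strictUpper_row, ← sum_strictUpper_col]
  constructor
  · rintro ⟨m, -, h⟩
    obtain ⟨heven, hrow, hcol⟩ := dvd_of_signedSum_modEq (strictUpper n) fun ε δ hε hδ =>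
      (h ε δ hε hδ).trans (h 1 1 (fun _ => Or.inl rfl) (fun _ => Or.inl rfl)).symm
    exact ⟨heven, hcol, hrow⟩
  · rintro ⟨heven, hcol, hrow⟩
    obtain ⟨m, hm, hN⟩ := exists_modEq_four_mul
      (signedSum_one_one (strictUpper n) ▸ Finset.dvd_sum fun j _ => hrow j)
    exact ⟨m, hm, fun ε δ hε hδ =>
      (signedSum_modEq_of_dvd _ heven hrow hcol ε δ hε hδ).trans hN⟩

/-- for `r ≥ 2` and nonnegative integers `n_{kj}` (`1 ≤ j < k ≤ r`),
with `p_k = Σ_{j<k} n_{kj}` and `q_j = Σ_{k>j} n_{kj}`, the following are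
equivalent: (i) there is `m ∈ {0,1}` with
`Σ_{j<k} ε_j δ_k n_{kj} ≡ 4m (mod 8)` for all `ε, δ ∈ {1,-1}^r`;
(ii) every `n_{kj}` is even and every `p_k` and every `q_j` is divisible by 4. -/
theorem statement18 (r : ℕ) (hr : 2 ≤ r) (n : Fin r → Fin r → ℕ) :
    (∃ m : ℕ, m ≤ 1 ∧ ∀ ε δ : Fin r → ℤ,
        (∀ i, ε i = 1 ∨ ε i = -1) → (∀ i, δ i = 1 ∨ δ i = -1) →
        (∑ j, ∑ k, if j < k then ε j * δ k * (n k j : ℤ) else 0) ≡ 4 * (m : ℤ) [ZMOD 8]) ↔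
      ((∀ j k : Fin r, j < k → 2 ∣ n k j) ∧
        (∀ k : Fin r, 4 ∣ ∑ j ∈ Finset.univ.filter (· < k), n k j) ∧
        (∀ j : Fin r, 4 ∣ ∑ k ∈ Finset.univ.filter (j < ·), n k j)) :=
  statement18_general r n

end HomCone
end
end
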